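/- (Lemma 3.1, a priori bounds.) For any (u,θ) ∈ V × W, every solution (ũ,θ̃) ∈ V × W of the linearized system satisfies ‖ũ‖_V ≤ K₁ and ‖θ̃‖_W ≤ K₂. -/

import Mathlib

open scoped RealInnerProductSpace

/-! Test each equation against its own solution. The transport terms `b u ũ ũ` and `b* u θ̃ θ̃`
vanish, leaving `κ ‖θ̃‖² = γ θ̃` and `ν ‖ũ‖² = Ri c(θ̃, ũ) + f ũ`; bounding the right-hand sides
and dividing by the norm gives `‖θ̃‖ ≤ K₂`, then `‖ũ‖ ≤ ν⁻¹ (Ri C_P² ‖θ̃‖ + ‖f‖) ≤ K₁`. -/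

theorem le_inv_mul_of_mul_sq_le_mul {t a C : ℝ} (ht : 0 ≤ t) (ha : 0 < a) (hC : 0 ≤ C)
    (h : a * t ^ 2 ≤ C * t) : t ≤ a⁻¹ * C := by
  rw [le_inv_mul_iff₀ ha]
  rcases ht.eq_or_lt with rfl | ht
  · rwa [mul_zero]
  · nlinarith

theorem norm_le_inv_mul_of_forall_add_mul_inner_eq {E : Type*} [NormedAddCommGroup E]
    [InnerProductSpace ℝ E] {B : E → E → ℝ} {ℓ : E → ℝ} {x : E} {a C : ℝ} (ha : 0 < a)
    (hC : 0 ≤ C) (hB : B x x = 0) (hℓ : ℓ x ≤ C * ‖x‖) (h : ∀ y, B x y + a * ⟪x, y⟫ = ℓ y) :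
    ‖x‖ ≤ a⁻¹ * C := by
  refine le_inv_mul_of_mul_sq_le_mul (norm_nonneg x) ha hC ?_
  have hx := h x
  rw [hB, zero_add, real_inner_self_eq_norm_sq] at hx
  exact hx ▸ hℓ

theorem ContinuousLinearMap.apply_le_opNorm_mul {E : Type*} [SeminormedAddCommGroup E]
    [NormedSpace ℝ E] (f : E →L[ℝ] ℝ) (x : E) : f x ≤ ‖f‖ * ‖x‖ :=
  (le_abs_self _).trans (f.le_opNorm x)

theorem linearized_boussinesq_apriori_bounds_general
    {V W : Type*} [NormedAddCommGroup V] [InnerProductSpace ℝ V]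
    [NormedAddCommGroup W] [InnerProductSpace ℝ W]
    (ν κ Ri CP : ℝ) (hν : 0 < ν) (hκ : 0 < κ) (hRi : 0 < Ri)
    (b : V →ₗ[ℝ] V →ₗ[ℝ] V →ₗ[ℝ] ℝ)
    (hb0 : ∀ u v : V, b u v v = 0)
    (bs : V →ₗ[ℝ] W →ₗ[ℝ] W →ₗ[ℝ] ℝ)
    (hbs0 : ∀ (u : V) (φ : W), bs u φ φ = 0)
    (c : W →ₗ[ℝ] V →ₗ[ℝ] ℝ)
    (hc : ∀ (θ : W) (v : V), |c θ v| ≤ CP ^ 2 * ‖θ‖ * ‖v‖)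
    (f : V →L[ℝ] ℝ) (γ : W →L[ℝ] ℝ)
    (u ut : V) (θ θt : W)
    (hut : ∀ v : V, b u ut v + ν * ⟪ut, v⟫ = Ri * c θt v + f v)
    (hθt : ∀ χ : W, bs u θt χ + κ * ⟪θt, χ⟫ = γ χ) :
    ‖ut‖ ≤ (Ri * CP ^ 2 * ν⁻¹ * κ⁻¹ * ‖γ‖ + ν⁻¹ * ‖f‖) ∧ ‖θt‖ ≤ (κ⁻¹ * ‖γ‖) := by
  have hθ : ‖θt‖ ≤ κ⁻¹ * ‖γ‖ :=
    norm_le_inv_mul_of_forall_add_mul_inner_eq (B := fun φ ψ => bs u φ ψ) hκ (norm_nonneg γ)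
      (hbs0 u θt) (γ.apply_le_opNorm_mul θt) hθt
  have hrhs : Ri * c θt ut + f ut ≤ (Ri * CP ^ 2 * ‖θt‖ + ‖f‖) * ‖ut‖ := by
    have hcθ : Ri * c θt ut ≤ Ri * (CP ^ 2 * ‖θt‖ * ‖ut‖) :=
      mul_le_mul_of_nonneg_left ((le_abs_self _).trans (hc θt ut)) hRi.le
    linarith [f.apply_le_opNorm_mul ut]
  have hu : ‖ut‖ ≤ ν⁻¹ * (Ri * CP ^ 2 * ‖θt‖ + ‖f‖) :=
    norm_le_inv_mul_of_forall_add_mul_inner_eq (B := fun v w => b u v w) hν (by positivity)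
      (hb0 u ut) hrhs hut
  refine ⟨?_, hθ⟩
  calc ‖ut‖ ≤ ν⁻¹ * (Ri * CP ^ 2 * ‖θt‖ + ‖f‖) := hu
    _ ≤ ν⁻¹ * (Ri * CP ^ 2 * (κ⁻¹ * ‖γ‖) + ‖f‖) := by gcongr
    _ = Ri * CP ^ 2 * ν⁻¹ * κ⁻¹ * ‖γ‖ + ν⁻¹ * ‖f‖ := by ring

/-- Lemma 3.1 (a priori bounds): every solution of the linearized system satisfies
`‖ũ‖ ≤ K₁` and `‖θ̃‖ ≤ K₂`. -/
theorem linearized_boussinesq_apriori_bounds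
    {V W : Type*} [NormedAddCommGroup V] [InnerProductSpace ℝ V] [FiniteDimensional ℝ V]
    [NormedAddCommGroup W] [InnerProductSpace ℝ W] [FiniteDimensional ℝ W]
    (ν κ Ri M CP : ℝ) (hν : 0 < ν) (hκ : 0 < κ) (hRi : 0 < Ri) (hM : 0 < M) (hCP : 0 < CP)
    (b : V →ₗ[ℝ] V →ₗ[ℝ] V →ₗ[ℝ] ℝ)
    (hb0 : ∀ u v : V, b u v v = 0)
    (hb : ∀ u v w : V, |b u v w| ≤ M * ‖u‖ * ‖v‖ * ‖w‖)
    (bs : V →ₗ[ℝ] W →ₗ[ℝ] W →ₗ[ℝ] ℝ)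
    (hbs0 : ∀ (u : V) (φ : W), bs u φ φ = 0)
    (hbs : ∀ (u : V) (φ ψ : W), |bs u φ ψ| ≤ M * ‖u‖ * ‖φ‖ * ‖ψ‖)
    (c : W →ₗ[ℝ] V →ₗ[ℝ] ℝ)
    (hc : ∀ (θ : W) (v : V), |c θ v| ≤ CP ^ 2 * ‖θ‖ * ‖v‖)
    (f : V →L[ℝ] ℝ) (γ : W →L[ℝ] ℝ)
    (u ut : V) (θ θt : W)
    (hut : ∀ v : V, b u ut v + ν * ⟪ut, v⟫ = Ri * c θt v + f v)
    (hθt : ∀ χ : W, bs u θt χ + κ * ⟪θt, χ⟫ = γ χ) :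
    ‖ut‖ ≤ (Ri * CP ^ 2 * ν⁻¹ * κ⁻¹ * ‖γ‖ + ν⁻¹ * ‖f‖) ∧ ‖θt‖ ≤ (κ⁻¹ * ‖γ‖) :=
  linearized_boussinesq_apriori_bounds_general ν κ Ri CP hν hκ hRi b hb0 bs hbs0 c hc f γ u ut θ θt
    hut hθt
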